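/- arXiv:2602.01104 — 2 statements merged into one kernel-verified Lean document; each statement's English description precedes it below -/
import Mathlib

section
/- In the same setting, the conditional probability satisfies the lower bound p(y|Y) ≥ (w(y)/W_Y)·(1 − (δ/(1−δ))·(|Y|/n)·(W_X/W_Y)). -/
open Finset

/-- Lower bound on conditional probabilities of the perturbed distribution. -/
theorem stmt_9 {α : Type*} [DecidableEq α] (X Y : Finset α) (hYX : Y ⊆ X)
    (w : α → ℝ) (hw : ∀ x, 0 ≤ w x) (hWY : 0 < ∑ y ∈ Y, w y)
    (δ : ℝ) (hδ0 : 0 < δ) (hδ1 : δ < 1) (y : α) (hy : y ∈ Y) :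
    (w y / (∑ y' ∈ Y, w y'))
        * (1 - (δ / (1 - δ)) * ((Y.card : ℝ) / (X.card : ℝ))
            * ((∑ x ∈ X, w x) / (∑ y' ∈ Y, w y')))
      ≤ ((1 - δ) * w y / (∑ x ∈ X, w x) + δ / X.card)
          / (∑ y' ∈ Y, ((1 - δ) * w y' / (∑ x ∈ X, w x) + δ / X.card)) := by
  have hn : 0 < (X.card : ℝ) := by
    exact_mod_cast card_pos.mpr ⟨y, hYX hy⟩
  have hk : 0 < (Y.card : ℝ) := by
    exact_mod_cast card_pos.mpr ⟨y, hy⟩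
  have hWX : 0 < ∑ x ∈ X, w x :=
    lt_of_lt_of_le hWY (Finset.sum_le_sum_of_subset_of_nonneg hYX (fun i _ _ => hw i))
  have hu : (0:ℝ) < 1 - δ := by linarith
  have hsum : ∑ y' ∈ Y, ((1 - δ) * w y' / (∑ x ∈ X, w x) + δ / X.card)
      = (1 - δ) * (∑ y' ∈ Y, w y') / (∑ x ∈ X, w x) + (Y.card : ℝ) * (δ / X.card) := by
    rw [Finset.sum_add_distrib, Finset.sum_const, nsmul_eq_mul, ← Finset.sum_div,
      ← Finset.mul_sum]
  rw [hsum]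
  set s := ∑ y' ∈ Y, w y' with hs
  set S := ∑ x ∈ X, w x with hS
  have hay : 0 ≤ w y := hw y
  have hD : 0 < (1 - δ) * s / S + (Y.card : ℝ) * (δ / X.card) := by positivity
  rw [le_div_iff₀ hD]
  have key : ((1 - δ) * w y / S + δ / (X.card : ℝ))
      - (w y / s) * (1 - (δ / (1 - δ)) * ((Y.card : ℝ) / (X.card : ℝ)) * (S / s))
        * ((1 - δ) * s / S + (Y.card : ℝ) * (δ / X.card))
      = δ / (X.card : ℝ)
        + w y * δ^2 * (Y.card : ℝ)^2 * S / ((1 - δ) * (X.card : ℝ)^2 * s^2) := by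
    field_simp
    ring
  nlinarith [key, div_pos hδ0 hn,
    mul_nonneg (mul_nonneg (mul_nonneg hay (sq_nonneg δ)) (sq_nonneg (Y.card : ℝ))) hWX.le,
    div_nonneg (mul_nonneg (mul_nonneg (mul_nonneg hay (sq_nonneg δ)) (sq_nonneg (Y.card : ℝ))) hWX.le)
      (by positivity : (0:ℝ) ≤ (1 - δ) * (X.card : ℝ)^2 * s^2)]
end

section
/- Let μ be a probability distribution on a finite subset P of ℝ^D with centroid c(P) (mean of P under μ). If c₁ is drawn from μ and cost(P,c₁) = Σ_{x∈P} μ-weighted ‖x−c₁‖², then E[cost(P,c₁)] = 2·Σ_x μ(x)‖x−c(P)‖² when μ is uniform; i.e., choosing a uniformly random point of a finite cluster as its center gives expected cost exactly twice the optimal 1-means cost of the cluster. -/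
open Finset

/-!
Expanding `‖p - z‖²` around the centroid `μ` of `P` kills the cross term, since the deviations
`p - μ` sum to zero; this gives the bias–variance identity
`∑ p ∈ P, ‖p - z‖² = opt₁(P) + #P ‖z - μ‖²`. Averaging it over `z ∈ P` gives
`opt₁(P) + ∑ z ∈ P, ‖z - μ‖² = 2 opt₁(P)`.
-/

theorem Finset.sum_sub_inv_card_smul_sum {𝕜 E : Type*} [DivisionRing 𝕜] [CharZero 𝕜]
    [AddCommGroup E] [Module 𝕜 E] (P : Finset E) :
    ∑ p ∈ P, (p - (#P : 𝕜)⁻¹ • ∑ q ∈ P, q) = 0 := by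
  rcases P.eq_empty_or_nonempty with rfl | hP
  · simp
  have hcard : (#P : 𝕜) ≠ 0 := Nat.cast_ne_zero.mpr hP.card_pos.ne'
  rw [sum_sub_distrib, sum_const, ← Nat.cast_smul_eq_nsmul 𝕜, smul_smul,
    mul_inv_cancel₀ hcard, one_smul, sub_self]

section InnerProductSpace

variable {E : Type*} [NormedAddCommGroup E] [InnerProductSpace ℝ E]

theorem Finset.sum_norm_sub_sq_eq_sum_norm_sub_centroid_sq_add (P : Finset E) (z : E) :
    ∑ p ∈ P, ‖p - z‖ ^ 2
      = ∑ p ∈ P, ‖p - (#P : ℝ)⁻¹ • ∑ q ∈ P, q‖ ^ 2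
        + #P * ‖z - (#P : ℝ)⁻¹ • ∑ q ∈ P, q‖ ^ 2 := by
  set μ := (#P : ℝ)⁻¹ • ∑ q ∈ P, q
  have expand : ∀ p ∈ P,
      ‖p - z‖ ^ 2 = ‖p - μ‖ ^ 2 - 2 * inner ℝ (p - μ) (z - μ) + ‖z - μ‖ ^ 2 := by
    intro p _
    rw [show p - z = (p - μ) - (z - μ) by abel, norm_sub_sq_real]
  have cross : ∑ p ∈ P, inner ℝ (p - μ) (z - μ) = 0 := by
    rw [← sum_inner, P.sum_sub_inv_card_smul_sum, inner_zero_left]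
  rw [sum_congr rfl expand, sum_add_distrib, sum_sub_distrib, ← mul_sum, cross, sum_const,
    nsmul_eq_mul]
  ring

theorem Finset.sum_sum_norm_sub_sq (P : Finset E) :
    ∑ c ∈ P, ∑ p ∈ P, ‖p - c‖ ^ 2
      = 2 * #P * ∑ p ∈ P, ‖p - (#P : ℝ)⁻¹ • ∑ q ∈ P, q‖ ^ 2 := by
  rw [sum_congr rfl fun c _ => P.sum_norm_sub_sq_eq_sum_norm_sub_centroid_sq_add c,
    sum_add_distrib, sum_const, nsmul_eq_mul, ← mul_sum]
  ring

end InnerProductSpace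

theorem stmt_18_general {D : ℕ} (P : Finset (EuclideanSpace ℝ (Fin D))) :
    ((P.card : ℝ))⁻¹ * ∑ c₁ ∈ P, ∑ p ∈ P, ‖p - c₁‖ ^ 2
      = 2 * ∑ p ∈ P, ‖p - (P.card : ℝ)⁻¹ • ∑ q ∈ P, q‖ ^ 2 := by
  rcases P.eq_empty_or_nonempty with rfl | hP
  · simp
  have hcard : (#P : ℝ) ≠ 0 := Nat.cast_ne_zero.mpr hP.card_pos.ne'
  rw [P.sum_sum_norm_sub_sq]
  field_simp

/-- Choosing a uniformly random point of a finite cluster as its center gives expected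
cost exactly twice the optimal 1-means cost of the cluster. -/
theorem stmt_18 {D : ℕ} (P : Finset (EuclideanSpace ℝ (Fin D))) (hP : P.Nonempty) :
    ((P.card : ℝ))⁻¹ * ∑ c₁ ∈ P, ∑ p ∈ P, ‖p - c₁‖ ^ 2
      = 2 * ∑ p ∈ P, ‖p - (P.card : ℝ)⁻¹ • ∑ q ∈ P, q‖ ^ 2 :=
  stmt_18_general P
end
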